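/- Define b(i,k) := ∫_{-∞}^{∞} e^{-x²} H_i'(x) sin(x) H_k(x) dx for natural numbers i ≥ 1, k ≥ 0. Then b satisfies the recurrence i(2i - 2k - 5) b(i+1, k+1) + (i+1) b(i, k+2) - 4(k+1)(i+1)(i-k-2) b(i,k) = 0 for all i ≥ 1, k ≥ 0. -/

import Mathlib

open MeasureTheory Real Filter

noncomputable def H : ℕ → ℝ → ℝ
  | 0 => fun _ => 1
  | 1 => fun x => 2 * x
  | (n + 2) => fun x => 2 * x * H (n + 1) x - 2 * (n + 1) * H n x

noncomputable def b (i k : ℕ) : ℝ :=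
  ∫ x : ℝ, Real.exp (-x ^ 2) * deriv (H i) x * Real.sin x * H k x

/-!
Put `E(m, k) = ∫ e^{-x²} H_m(x) H_k(x) e^{ix} dx` (`hermiteExpIntegral`), so that
`b(i, k) = 2i Im E(i-1, k)`. Integrating by parts against `(e^{-x²} H_m)' = -e^{-x²} H_{m+1}`
gives `E(m+1, k) = i E(m, k) + 2k E(m, k-1)`; together with the symmetry `E(m, k) = E(k, m)`
this yields `E(m, k) = i^{m+k} S(m, k) E(0, 0)` for the integers `S = hermiteExpCoeff`,
`S(0, k) = 1`, `S(m+1, k) = S(m, k) - 2k S(m, k-1)`. The recurrence for `b` is then a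
three-term identity for `S`, proved by induction on `m`.
-/

open Polynomial Complex

lemma H_succ (n : ℕ) (x : ℝ) : H (n + 1) x = 2 * x * H n x - 2 * n * H (n - 1) x := by
  cases n with
  | zero => simp [H]
  | succ n => simp [H]

lemma hasDerivAt_H (n : ℕ) (x : ℝ) : HasDerivAt (H n) (2 * n * H (n - 1) x) x := by
  induction n using Nat.strong_induction_on generalizing x with
  | _ n ih =>
    match n with
    | 0 => simpa [H] using hasDerivAt_const x (1 : ℝ)
    | 1 => simpa [H] using (hasDerivAt_id x).const_mul (2 : ℝ)
    | n + 2 =>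
      have h := (((hasDerivAt_id' x).const_mul 2).fun_mul (ih (n + 1) (by omega) x)).fun_sub
        ((ih n (by omega) x).const_mul (2 * ((n : ℝ) + 1)))
      refine h.congr_deriv ?_
      simp only [show n + 2 - 1 = n + 1 by omega, Nat.add_sub_cancel]
      push_cast
      linear_combination -2 * ((n : ℝ) + 1) * H_succ n x

lemma exists_polynomial_eval_eq_H (n : ℕ) : ∃ p : ℝ[X], ∀ x, H n x = p.eval x := by
  induction n using Nat.strong_induction_on with
  | _ n ih =>
    match n with
    | 0 => exact ⟨1, by simp [H]⟩
    | 1 => exact ⟨C 2 * X, by simp [H]⟩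
    | n + 2 =>
      obtain ⟨p, hp⟩ := ih (n + 1) (by omega)
      obtain ⟨q, hq⟩ := ih n (by omega)
      exact ⟨C 2 * X * p - C (2 * ((n : ℝ) + 1)) * q, fun x => by simp [H, hp, hq]⟩

lemma hasDerivAt_exp_neg_sq_mul_H (m : ℕ) (x : ℝ) :
    HasDerivAt (fun y => Real.exp (-y ^ 2) * H m y) (-(Real.exp (-x ^ 2) * H (m + 1) x)) x := by
  refine (((hasDerivAt_pow 2 x).fun_neg.exp).fun_mul (hasDerivAt_H m x)).congr_deriv ?_
  rw [H_succ]; push_cast; ring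

lemma integrable_eval_mul_exp_neg_sq (p : ℝ[X]) :
    Integrable fun x : ℝ => p.eval x * Real.exp (-x ^ 2) := by
  induction p using Polynomial.induction_on' with
  | add p q hp hq => simpa [add_mul] using hp.fun_add hq
  | monomial n a =>
    have h := integrable_rpow_mul_exp_neg_mul_sq (b := 1) one_pos (s := n)
      (by linarith [(n.cast_nonneg : (0 : ℝ) ≤ n)])
    simpa [mul_assoc] using h.const_mul a

lemma integrable_exp_neg_sq_mul_H_mul_H (m k : ℕ) :
    Integrable fun x : ℝ => Real.exp (-x ^ 2) * H m x * H k x := by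
  obtain ⟨p, hp⟩ := exists_polynomial_eval_eq_H m
  obtain ⟨q, hq⟩ := exists_polynomial_eval_eq_H k
  simpa [hp, hq, mul_comm, mul_left_comm, mul_assoc] using integrable_eval_mul_exp_neg_sq (p * q)

noncomputable def hermiteExpIntegrand (m k : ℕ) (x : ℝ) : ℂ :=
  ((Real.exp (-x ^ 2) * H m x * H k x : ℝ) : ℂ) * cexp (x * I)

noncomputable def hermiteExpIntegral (m k : ℕ) : ℂ :=
  ∫ x : ℝ, hermiteExpIntegrand m k x

lemma integrable_hermiteExpIntegrand (m k : ℕ) : Integrable (hermiteExpIntegrand m k) :=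
  (integrable_exp_neg_sq_mul_H_mul_H m k).ofReal.mul_bdd (c := 1)
    (by fun_prop) (ae_of_all _ fun x => by simp [norm_exp_ofReal_mul_I])

lemma hermiteExpIntegral_comm (m k : ℕ) : hermiteExpIntegral m k = hermiteExpIntegral k m := by
  simp only [hermiteExpIntegral, hermiteExpIntegrand, mul_right_comm _ (H m _)]

lemma integral_exp_neg_sq_mul_H_succ_mul {f f' : ℝ → ℂ} (m : ℕ)
    (hf : ∀ x, HasDerivAt f (f' x) x)
    (hint : Integrable fun x => ((Real.exp (-x ^ 2) * H (m + 1) x : ℝ) : ℂ) * f x)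
    (hint' : Integrable fun x => ((Real.exp (-x ^ 2) * H m x : ℝ) : ℂ) * f' x)
    (hint₀ : Integrable fun x => ((Real.exp (-x ^ 2) * H m x : ℝ) : ℂ) * f x) :
    ∫ x, ((Real.exp (-x ^ 2) * H (m + 1) x : ℝ) : ℂ) * f x
      = ∫ x, ((Real.exp (-x ^ 2) * H m x : ℝ) : ℂ) * f' x := by
  have hu (x : ℝ) := (hasDerivAt_exp_neg_sq_mul_H m x).ofReal_comp
  have key := integral_mul_deriv_eq_deriv_mul_of_integrable (fun x _ => hu x) (fun x _ => hf x)
    hint' (hint.neg.congr (ae_of_all _ fun x => by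
      simp only [Pi.mul_apply, Pi.neg_apply]; push_cast; ring)) hint₀
  simpa [integral_neg] using key.symm

lemma hermiteExpIntegral_succ_left (m k : ℕ) :
    hermiteExpIntegral (m + 1) k
      = I * hermiteExpIntegral m k + 2 * k * hermiteExpIntegral m (k - 1) := by
  set f' : ℝ → ℂ := fun x =>
    (2 * k * H (k - 1) x : ℝ) * cexp (x * I) + H k x * (cexp (x * I) * I)
  have hf (x : ℝ) : HasDerivAt (fun y => (H k y : ℂ) * cexp (y * I)) (f' x) x := by
    simpa [f'] using
      (hasDerivAt_H k x).ofReal_comp.fun_mul ((hasDerivAt_id' x).ofReal_comp.mul_const I).cexp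
  have hF (m k : ℕ) (x : ℝ) : hermiteExpIntegrand m k x
      = ((Real.exp (-x ^ 2) * H m x : ℝ) : ℂ) * ((H k x : ℂ) * cexp (x * I)) := by
    simp only [hermiteExpIntegrand]; push_cast; ring
  have hF' (x : ℝ) : ((Real.exp (-x ^ 2) * H m x : ℝ) : ℂ) * f' x
      = I * hermiteExpIntegrand m k x + 2 * k * hermiteExpIntegrand m (k - 1) x := by
    simp only [f', hermiteExpIntegrand]; push_cast; ring
  have hint := integrable_hermiteExpIntegrand
  have hint' := ((hint m k).const_mul I).add ((hint m (k - 1)).const_mul (2 * k : ℂ))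
  have key := integral_exp_neg_sq_mul_H_succ_mul m hf
    ((hint (m + 1) k).congr (ae_of_all _ (hF (m + 1) k)))
    (hint'.congr (ae_of_all _ fun x => (hF' x).symm)) ((hint m k).congr (ae_of_all _ (hF m k)))
  simp only [← hF, hF'] at key
  rw [hermiteExpIntegral, key,
    integral_add ((hint m k).const_mul _) ((hint m (k - 1)).const_mul _),
    integral_const_mul, integral_const_mul, hermiteExpIntegral, hermiteExpIntegral]

lemma hermiteExpIntegral_zero_left (k : ℕ) :
    hermiteExpIntegral 0 k = I ^ k * hermiteExpIntegral 0 0 := by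
  induction k with
  | zero => simp
  | succ k ih =>
    rw [hermiteExpIntegral_comm, hermiteExpIntegral_succ_left, hermiteExpIntegral_comm, ih]
    simp only [CharP.cast_eq_zero, mul_zero, zero_mul, add_zero]
    ring

def hermiteExpCoeff : ℕ → ℕ → ℤ
  | 0, _ => 1
  | m + 1, k => hermiteExpCoeff m k - 2 * k * hermiteExpCoeff m (k - 1)

lemma hermiteExpCoeff_zero_right (m : ℕ) : hermiteExpCoeff m 0 = 1 := by
  induction m with
  | zero => rfl
  | succ m ih => simp [hermiteExpCoeff, ih]

lemma hermiteExpCoeff_one_right (m : ℕ) : hermiteExpCoeff m 1 = 1 - 2 * m := by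
  induction m with
  | zero => rfl
  | succ m ih =>
    simp only [hermiteExpCoeff, ih, Nat.sub_self, hermiteExpCoeff_zero_right]
    push_cast
    ring

lemma hermiteExpCoeff_recurrence (m k : ℕ) :
    (2 * m - 2 * k - 1) * hermiteExpCoeff (m + 1) k + hermiteExpCoeff m (k + 1)
      + 4 * k * (m - k) * hermiteExpCoeff m (k - 1) = 0 := by
  induction m generalizing k with
  | zero => simp only [hermiteExpCoeff]; push_cast; ring
  | succ m ih =>
    cases k with
    | zero =>
      simp only [zero_add, hermiteExpCoeff_zero_right, hermiteExpCoeff_one_right]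
      push_cast
      ring
    | succ k =>
      have h1 := ih (k + 1)
      have h2 := ih k
      simp only [hermiteExpCoeff, Nat.add_sub_cancel] at h1 h2 ⊢
      push_cast at h1 h2 ⊢
      linear_combination h1 - 2 * ((k : ℤ) + 1) * h2

lemma hermiteExpIntegral_eq (m k : ℕ) :
    hermiteExpIntegral m k = I ^ (m + k) * hermiteExpCoeff m k * hermiteExpIntegral 0 0 := by
  induction m generalizing k with
  | zero => rw [hermiteExpIntegral_zero_left]; simp [hermiteExpCoeff]
  | succ m ih =>
    rw [hermiteExpIntegral_succ_left, ih k]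
    cases k with
    | zero =>
      simp only [hermiteExpCoeff_zero_right, CharP.cast_eq_zero, mul_zero, zero_mul, add_zero]
      ring
    | succ j =>
      rw [Nat.add_sub_cancel, ih j, hermiteExpCoeff]
      push_cast
      linear_combination
        (2 * (j + 1) * hermiteExpCoeff m j * I ^ (m + j) * hermiteExpIntegral 0 0) * I_sq

lemma hermiteExpIntegral_recurrence (m k : ℕ) :
    ((2 * m - 2 * k - 3 : ℝ) : ℂ) * hermiteExpIntegral (m + 1) (k + 1)
      + hermiteExpIntegral m (k + 2)
      - ((4 * (k + 1) * (m - k - 1) : ℝ) : ℂ) * hermiteExpIntegral m k = 0 := by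
  have h := congrArg (fun n : ℤ => (n : ℂ)) (hermiteExpCoeff_recurrence m (k + 1))
  simp only [Nat.add_sub_cancel] at h
  push_cast at h ⊢
  rw [hermiteExpIntegral_eq (m + 1), hermiteExpIntegral_eq m (k + 2), hermiteExpIntegral_eq m k]
  linear_combination (I ^ (m + k + 2) * hermiteExpIntegral 0 0) * h
    - 4 * ((m : ℂ) - k - 1) * (k + 1) * I ^ (m + k) * hermiteExpCoeff m k
      * hermiteExpIntegral 0 0 * I_sq

lemma b_eq_im (i k : ℕ) : b i k = 2 * i * (hermiteExpIntegral (i - 1) k).im := by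
  rw [hermiteExpIntegral, ← RCLike.im_to_complex,
    ← integral_im (integrable_hermiteExpIntegrand _ _), b, ← integral_const_mul]
  congr 1; ext x
  rw [RCLike.im_to_complex, hermiteExpIntegrand, im_ofReal_mul, exp_ofReal_mul_I_im,
    (hasDerivAt_H i x).deriv]
  ring

theorem b_recurrence_general (i k : ℕ) :
    (i : ℝ) * (2 * (i : ℝ) - 2 * (k : ℝ) - 5) * b (i + 1) (k + 1)
      + ((i : ℝ) + 1) * b i (k + 2)
      - 4 * ((k : ℝ) + 1) * ((i : ℝ) + 1) * ((i : ℝ) - (k : ℝ) - 2) * b i k = 0 := by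
  rcases i with _ | m
  · simp [b_eq_im]
  · have h := congrArg Complex.im (hermiteExpIntegral_recurrence m k)
    simp only [sub_im, add_im, im_ofReal_mul, zero_im] at h
    simp only [b_eq_im, Nat.add_sub_cancel]
    push_cast
    linear_combination 2 * ((m : ℝ) + 1) * ((m : ℝ) + 2) * h

theorem b_recurrence (i k : ℕ) (hi : 1 ≤ i) :
    (i : ℝ) * (2 * (i : ℝ) - 2 * (k : ℝ) - 5) * b (i + 1) (k + 1)
      + ((i : ℝ) + 1) * b i (k + 2)
      - 4 * ((k : ℝ) + 1) * ((i : ℝ) + 1) * ((i : ℝ) - (k : ℝ) - 2) * b i k = 0 :=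
  b_recurrence_general i k
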